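/- Assume Assumption (σ) and let b : ℝ^d → ℝ^d be bounded continuous. Let γ ∈ (0,1) with 1+γ > α, let κ > 0, let f : ℝ^d → ℝ be bounded continuous, and suppose u ∈ C_b^{1+γ}(ℝ^d) satisfies κu(x) − L^α u(x) = f(x) for all x ∈ ℝ^d. Then κ‖u‖₀ ≤ ‖f‖₀. -/

import Mathlib

open MeasureTheory Metric

noncomputable section

abbrev Ed (d : ℕ) := EuclideanSpace ℝ (Fin d)

def supNorm {d : ℕ} {F : Type*} [NormedAddCommGroup F] (f : Ed d → F) : ℝ := ⨆ x, ‖f x‖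

def hSemi {d : ℕ} {F : Type*} [NormedAddCommGroup F] (θ : ℝ) (f : Ed d → F) : ℝ :=
  sInf {M | 0 ≤ M ∧ ∀ x y, ‖f x - f y‖ ≤ M * ‖x - y‖ ^ θ}

def IsPeriodic {d : ℕ} {F : Type*} (f : Ed d → F) : Prop :=
  ∀ (x : Ed d) (k : Fin d → ℤ),
    f (x + (EuclideanSpace.equiv (Fin d) ℝ).symm (fun i => (k i : ℝ))) = f x

structure SigmaHyp (d : ℕ) (σ : Ed d → Ed d → Ed d) (Cσ : ℝ) (φ : Ed d → ℝ) : Prop where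
  hC : 0 < Cσ
  smooth : ∀ x, ContDiff ℝ 2 (σ x)
  lipschitz : ∀ x₁ x₂ y, ‖σ x₁ y - σ x₂ y‖ ≤ Cσ * ‖x₁ - x₂‖ * ‖y‖
  odd : ∀ x y, σ x (-y) = -σ x y
  jacobian : ∀ x y, ∃ L : Ed d ≃L[ℝ] Ed d,
    (L : Ed d →L[ℝ] Ed d) = fderiv ℝ (σ x) y ∧ ‖(L.symm : Ed d →L[ℝ] Ed d)‖ ≤ Cσ
  phi_meas : Measurable φ
  phi_pos : ∀ x, 0 < φ x
  phi_bdd : ∃ M, ∀ x, φ x ≤ M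
  growth_lower : ∀ x y, (φ x)⁻¹ * ‖y‖ ≤ ‖σ x y‖
  growth_upper : ∀ x y, ‖σ x y‖ ≤ φ x * ‖y‖

/-- The nonlocal operator
`L^α u(x) = ∫_{ℝ^d∖{0}} [u(x+σ(x,y)) − u(x) − 1_B(y) σ(x,y)·∇u(x)] ν^α(dy) + b(x)·∇u(x)`. -/
def Lalpha (d : ℕ) (α : ℝ) (σ : Ed d → Ed d → Ed d) (b : Ed d → Ed d)
    (u : Ed d → ℝ) (x : Ed d) : ℝ :=
  (∫ y in {y : Ed d | y ≠ 0},
      ‖y‖ ^ (-((d : ℝ) + α)) •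
        (u (x + σ x y) - u x -
          Set.indicator (ball (0 : Ed d) 1) (fun y' => fderiv ℝ u x (σ x y')) y)) +
    fderiv ℝ u x (b x)

/-!
Approximate maximisation. If `u x ≥ sup u - t²`, the Hölder bound on `Du` forces
`‖Du(x)‖ ≤ t + M t ^ γ`. Each jump term `u(x + σ(x,y)) - u(x) - 1_B(y) Du(x) σ(x,y)` is then at
most `t² + Φ ‖Du(x)‖ ‖y‖`, and for `‖y‖ < 1` also at most `M Φ ^ (1 + γ) ‖y‖ ^ (1 + γ)` by
Taylor's formula. As `α < 1 + γ`, the kernel `‖y‖ ^ (-(d + α))` integrates the latter bound near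
`0`, so by dominated convergence `L^α u(x) → 0` as `t → 0`, and
`κ sup u ≤ κ u(x) + κ t² = f(x) + L^α u(x) + κ t² ≤ ‖f‖₀ + o(1)`. The same argument for `-u`
bounds `-inf u`.
-/

open Set Filter Topology Module

section Holder

variable {E F : Type*} [NormedAddCommGroup E] [NormedSpace ℝ E]
  [NormedAddCommGroup F] [NormedSpace ℝ F]

theorem norm_sub_sub_fderiv_le_of_holder {u : E → F} (hu : Differentiable ℝ u) {M γ : ℝ}
    (hM : 0 ≤ M) (hγ : 0 ≤ γ)
    (hDu : ∀ x y, ‖fderiv ℝ u x - fderiv ℝ u y‖ ≤ M * ‖x - y‖ ^ γ) (x h : E) :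
    ‖u (x + h) - u x - fderiv ℝ u x h‖ ≤ M * ‖h‖ ^ (1 + γ) := by
  have hmvt := Convex.norm_image_sub_le_of_norm_hasFDerivWithin_le
    (f := fun z => u z - fderiv ℝ u x z) (f' := fun z => fderiv ℝ u z - fderiv ℝ u x)
    (C := M * ‖h‖ ^ γ) (s := closedBall x ‖h‖) (y := x + h)
    (fun z _ => ((hu z).hasFDerivAt.sub (fderiv ℝ u x).hasFDerivAt).hasFDerivWithinAt)
    (fun z hz => (hDu z x).trans (by gcongr; exact mem_closedBall_iff_norm.1 hz))
    (convex_closedBall _ _) (mem_closedBall_self (norm_nonneg h)) (by simp [dist_eq_norm])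
  rcases (norm_nonneg h).eq_or_lt with hh | hh
  · simp [norm_eq_zero.1 hh.symm, Real.zero_rpow (by positivity : 1 + γ ≠ 0)]
  · rw [Real.rpow_add hh, Real.rpow_one]
    convert hmvt using 1
    · congr 1; simp only [map_add]; abel
    · simp only [add_sub_cancel_left]; ring

/-- Taylor's formula with step `t` in a unit direction `w` gives `t * Du(x) w ≤ ε + M t ^ (1 + γ)`
at an `ε`-maximum point `x`. -/
theorem norm_fderiv_le_of_le_add {u : E → ℝ} (hu : Differentiable ℝ u) {M γ : ℝ}
    (hM : 0 ≤ M) (hγ : 0 ≤ γ)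
    (hDu : ∀ x y, ‖fderiv ℝ u x - fderiv ℝ u y‖ ≤ M * ‖x - y‖ ^ γ)
    {x : E} {ε : ℝ} (hmax : ∀ z, u z ≤ u x + ε) {t : ℝ} (ht : 0 < t) :
    ‖fderiv ℝ u x‖ ≤ ε / t + M * t ^ γ := by
  set L := fderiv ℝ u x
  have hε : 0 ≤ ε := by linarith [hmax x]
  have hunit : ∀ w : E, ‖w‖ = 1 → L w ≤ ε / t + M * t ^ γ := by
    intro w hw
    have htaylor := norm_sub_sub_fderiv_le_of_holder hu hM hγ hDu x (t • w)
    rw [Real.norm_eq_abs, norm_smul, hw, Real.norm_of_nonneg ht.le, mul_one, map_smul,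
      smul_eq_mul] at htaylor
    have hstep : t * L w ≤ t * (ε / t + M * t ^ γ) := by
      rw [mul_add, mul_div_cancel₀ _ ht.ne', mul_left_comm, ← Real.rpow_one_add' ht.le
        (by positivity)]
      linarith [(abs_le.1 htaylor).1, hmax (x + t • w)]
    exact le_of_mul_le_mul_left hstep ht
  refine L.opNorm_le_bound (by positivity) fun v => ?_
  rcases eq_or_ne v 0 with rfl | hv
  · simp
  have hv' : 0 < ‖v‖ := norm_pos_iff.2 hv
  have hw : ‖‖v‖⁻¹ • v‖ = 1 := by rw [norm_smul, norm_inv, norm_norm, inv_mul_cancel₀ hv'.ne']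
  have hLv : L v = ‖v‖ * L (‖v‖⁻¹ • v) := by
    rw [map_smul, smul_eq_mul, ← mul_assoc, mul_inv_cancel₀ hv'.ne', one_mul]
  have h₁ := hunit _ hw
  have h₂ := hunit (-(‖v‖⁻¹ • v)) (by rw [norm_neg, hw])
  rw [map_neg] at h₂
  rw [Real.norm_eq_abs, abs_le, hLv, mul_comm _ ‖v‖]
  constructor <;> nlinarith

end Holder

section PowerIntegrability

variable {E : Type*} [NormedAddCommGroup E] [NormedSpace ℝ E] [FiniteDimensional ℝ E]
  [MeasurableSpace E] [BorelSpace E] (μ : Measure E) [μ.IsAddHaarMeasure]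

theorem integrableOn_compl_ball_norm_rpow [Nontrivial E] {q : ℝ}
    (hq : q < -(finrank ℝ E : ℝ)) {r : ℝ} (hr : 0 < r) :
    IntegrableOn (fun x : E => ‖x‖ ^ q) (ball 0 r)ᶜ μ := by
  -- in polar coordinates this is `∫_r^∞ y ^ (finrank ℝ E - 1 + q) dy`
  have hradial : IntegrableOn (fun y : ℝ => y ^ (finrank ℝ E - 1) • y ^ q) (Ici r) := by
    rw [integrableOn_Ici_iff_integrableOn_Ioi]
    refine (integrableOn_Ioi_rpow_of_lt (a := (finrank ℝ E - 1 : ℕ) + q) ?_ hr).congr_fun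
      (fun y hy => ?_) measurableSet_Ioi
    · have hcast := Nat.cast_sub (R := ℝ)
        (Nat.one_le_iff_ne_zero.2 (finrank_pos (R := ℝ) (M := E)).ne')
      push_cast [hcast]
      linarith
    · rw [smul_eq_mul, ← Real.rpow_natCast, ← Real.rpow_add (hr.trans hy)]
  rw [← integrable_indicator_iff measurableSet_ball.compl]
  refine ((integrable_fun_norm_addHaar μ (f := (Ici r).indicator fun y : ℝ => y ^ q)).2 ?_).congr
    (ae_of_all _ fun x => ?_)
  · refine ((integrable_indicator_iff measurableSet_Ici).2 hradial).integrableOn.congr_fun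
      (fun y _ => ?_) measurableSet_Ioi
    by_cases hy : r ≤ y <;> simp [indicator, hy]
  · by_cases hx : ‖x‖ < r <;> simp [indicator, hx, not_lt.1]

theorem integrable_norm_rpow_mul_ite (hE : 1 ≤ finrank ℝ E) {α γ : ℝ} (hα : 0 < α)
    (hαγ : α < 1 + γ) (C A : ℝ) :
    Integrable (fun y : E => ‖y‖ ^ (-(finrank ℝ E + α)) *
      if ‖y‖ < 1 then C * ‖y‖ ^ (1 + γ) else A) μ := by
  have : Nontrivial E := Module.nontrivial_of_finrank_pos (R := ℝ) hE
  have hmeas : Measurable fun y : E => ‖y‖ ^ (-(finrank ℝ E + α)) *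
      if ‖y‖ < 1 then C * ‖y‖ ^ (1 + γ) else A :=
    (measurable_norm.pow_const _).mul <| Measurable.ite (measurableSet_lt measurable_norm
      measurable_const) ((measurable_norm.pow_const _).const_mul C) measurable_const
  rw [← integrableOn_univ, ← union_compl_self (ball (0 : E) 1), integrableOn_union]
  constructor
  · refine integrableOn_ball_of_norm_le_rpow (C := |C|) (α := finrank ℝ E + α - (1 + γ)) hE
      (by linarith) ((ae_restrict_iff' measurableSet_ball).2 (ae_of_all _ fun y hy => ?_))
      hmeas.aestronglyMeasurable
    have hpow : ‖y‖ ^ (-(finrank ℝ E + α)) * ‖y‖ ^ (1 + γ)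
        ≤ ‖y‖ ^ (-(finrank ℝ E + α - (1 + γ))) := by
      rcases eq_or_ne y 0 with rfl | hy0
      · rw [norm_zero, Real.zero_rpow (by linarith), zero_mul]
        positivity
      · rw [← Real.rpow_add (norm_pos_iff.2 hy0)]
        exact le_of_eq (by congr 1; ring)
    rw [if_pos (mem_ball_zero_iff.1 hy), norm_mul, norm_mul, Real.norm_eq_abs C,
      Real.norm_of_nonneg (by positivity), Real.norm_of_nonneg (by positivity), mul_left_comm]
    gcongr
  · refine IntegrableOn.congr_fun ((integrableOn_compl_ball_norm_rpow μ
      (q := -(finrank ℝ E + α)) (by linarith) one_pos).const_mul A) (fun y hy => ?_)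
      measurableSet_ball.compl
    rw [if_neg (by simpa using hy), mul_comm]

end PowerIntegrability

/-- Majorant of the jump term `u (x + s y) - u x - 1_B(y) Du(x) (s y)` when `u ≤ u x + ε`,
`‖Du(x)‖ ≤ g` and `‖s y‖ ≤ Φ ‖y‖`: the first entry of the minimum comes from near-maximality,
the second, with `C = M Φ ^ (1 + γ)`, from Taylor's formula for a `γ`-Hölder `Du`. -/
def jumpBound {E : Type*} [Norm E] (C Φ γ ε g : ℝ) (y : E) : ℝ :=
  if ‖y‖ < 1 then min (ε + Φ * g * ‖y‖) (C * ‖y‖ ^ (1 + γ)) else ε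

section JumpBound

variable {E : Type*} [NormedAddCommGroup E] {C Φ γ ε g : ℝ}

theorem jumpBound_nonneg (hC : 0 ≤ C) (hΦ : 0 ≤ Φ) (hε : 0 ≤ ε) (hg : 0 ≤ g) (y : E) :
    0 ≤ jumpBound C Φ γ ε g y := by
  unfold jumpBound
  split_ifs <;> positivity

theorem jumpBound_le_ite {A : ℝ} (hεA : ε ≤ A) (y : E) :
    jumpBound C Φ γ ε g y ≤ if ‖y‖ < 1 then C * ‖y‖ ^ (1 + γ) else A := by
  unfold jumpBound
  split_ifs
  exacts [min_le_right _ _, hεA]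

theorem measurable_jumpBound [MeasurableSpace E] [OpensMeasurableSpace E] :
    Measurable (jumpBound (E := E) C Φ γ ε g) :=
  Measurable.ite (measurableSet_lt measurable_norm measurable_const)
    (((measurable_norm.const_mul _).const_add _).min ((measurable_norm.pow_const _).const_mul C))
    measurable_const

theorem tendsto_jumpBound {ι : Type*} {l : Filter ι} {ε g : ι → ℝ} (hC : 0 ≤ C)
    (hε : Tendsto ε l (𝓝 0)) (hg : Tendsto g l (𝓝 0)) (y : E) :
    Tendsto (fun i => jumpBound C Φ γ (ε i) (g i) y) l (𝓝 0) := by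
  unfold jumpBound
  split_ifs
  · have := (hε.add ((hg.const_mul Φ).mul_const ‖y‖)).min
      (tendsto_const_nhds (x := C * ‖y‖ ^ (1 + γ)))
    rwa [mul_zero, zero_mul, add_zero, min_eq_left (by positivity)] at this
  · exact hε

theorem sub_sub_indicator_le_jumpBound [NormedSpace ℝ E] {u : E → ℝ} (hu : Differentiable ℝ u)
    {M : ℝ} (hM : 0 ≤ M) (hγ : 0 ≤ γ)
    (hDu : ∀ x y, ‖fderiv ℝ u x - fderiv ℝ u y‖ ≤ M * ‖x - y‖ ^ γ)
    {s : E → E} (hΦ : 0 ≤ Φ) (hs : ∀ y, ‖s y‖ ≤ Φ * ‖y‖)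
    {x : E} (hmax : ∀ z, u z ≤ u x + ε) (hg : ‖fderiv ℝ u x‖ ≤ g) (y : E) :
    u (x + s y) - u x - (ball 0 1).indicator (fun y' => fderiv ℝ u x (s y')) y
      ≤ jumpBound (M * Φ ^ (1 + γ)) Φ γ ε g y := by
  have hjump : u (x + s y) - u x ≤ ε := by linarith [hmax (x + s y)]
  unfold jumpBound
  split_ifs with hy
  · rw [indicator_of_mem (mem_ball_zero_iff.2 hy)]
    refine le_min ?_ ?_
    · have : -(fderiv ℝ u x (s y)) ≤ Φ * g * ‖y‖ :=
        calc -(fderiv ℝ u x (s y)) ≤ ‖fderiv ℝ u x‖ * ‖s y‖ :=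
              (neg_le_abs _).trans ((fderiv ℝ u x).le_opNorm _)
          _ ≤ g * (Φ * ‖y‖) := mul_le_mul hg (hs y) (norm_nonneg _) ((norm_nonneg _).trans hg)
          _ = Φ * g * ‖y‖ := by ring
      linarith
    · calc u (x + s y) - u x - fderiv ℝ u x (s y)
          ≤ M * ‖s y‖ ^ (1 + γ) :=
            (le_abs_self _).trans (norm_sub_sub_fderiv_le_of_holder hu hM hγ hDu x (s y))
        _ ≤ M * (Φ * ‖y‖) ^ (1 + γ) := by gcongr; exact hs y
        _ = M * Φ ^ (1 + γ) * ‖y‖ ^ (1 + γ) := by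
            rw [Real.mul_rpow hΦ (norm_nonneg _), mul_assoc]
  · rw [indicator_of_notMem (by simpa using hy), sub_zero]
    exact hjump

end JumpBound

theorem tendsto_integral_jumpBound {E : Type*} [NormedAddCommGroup E] [NormedSpace ℝ E]
    [FiniteDimensional ℝ E] [MeasurableSpace E] [BorelSpace E] (μ : Measure E)
    [μ.IsAddHaarMeasure] (hE : 1 ≤ finrank ℝ E) {α γ C Φ : ℝ} (hα : 0 < α)
    (hαγ : α < 1 + γ) (hC : 0 ≤ C) (hΦ : 0 ≤ Φ) {ι : Type*} {l : Filter ι}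
    [l.IsCountablyGenerated] {ε g : ι → ℝ} (hε : Tendsto ε l (𝓝 0)) (hg : Tendsto g l (𝓝 0))
    (hε0 : ∀ᶠ i in l, 0 ≤ ε i) (hg0 : ∀ᶠ i in l, 0 ≤ g i) :
    Tendsto (fun i => ∫ y, ‖y‖ ^ (-(finrank ℝ E + α)) * jumpBound C Φ γ (ε i) (g i) y ∂μ)
      l (𝓝 0) := by
  have hlim := tendsto_integral_filter_of_dominated_convergence (μ := μ) (l := l)
    (F := fun i y => ‖y‖ ^ (-(finrank ℝ E + α)) * jumpBound C Φ γ (ε i) (g i) y) (f := 0)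
    _ (Eventually.of_forall fun i => ((measurable_norm.pow_const _).mul
      measurable_jumpBound).aestronglyMeasurable) ?_
    (integrable_norm_rpow_mul_ite μ hE hα hαγ C 1)
    (ae_of_all _ fun y => by
      simpa using (tendsto_jumpBound hC hε hg y).const_mul (‖y‖ ^ (-(finrank ℝ E + α))))
  · simpa using hlim
  · filter_upwards [hε0, hg0, hε.eventually (ge_mem_nhds one_pos)] with i hεi hgi hε1
    refine ae_of_all _ fun y => ?_
    rw [norm_mul, Real.norm_of_nonneg (by positivity),
      Real.norm_of_nonneg (jumpBound_nonneg hC hΦ hεi hgi y)]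
    gcongr
    exact jumpBound_le_ite hε1 y

theorem Lalpha_le_of_le_add {d : ℕ} (hd : 1 ≤ d) {α γ : ℝ} (hα : 0 < α) (hγ : 0 ≤ γ)
    (hαγ : α < 1 + γ) {σ : Ed d → Ed d → Ed d} {Φ : ℝ} (hΦ : 0 ≤ Φ)
    (hσ : ∀ x y, ‖σ x y‖ ≤ Φ * ‖y‖) {b : Ed d → Ed d} {Mb : ℝ} (hb : ∀ x, ‖b x‖ ≤ Mb)
    {u : Ed d → ℝ} (hu : Differentiable ℝ u) {M : ℝ} (hM : 0 ≤ M)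
    (hDu : ∀ x y, ‖fderiv ℝ u x - fderiv ℝ u y‖ ≤ M * ‖x - y‖ ^ γ)
    {x : Ed d} {ε g : ℝ} (hmax : ∀ z, u z ≤ u x + ε) (hg : ‖fderiv ℝ u x‖ ≤ g) :
    Lalpha d α σ b u x ≤
      (∫ y : Ed d, ‖y‖ ^ (-((d : ℝ) + α)) * jumpBound (M * Φ ^ (1 + γ)) Φ γ ε g y) + Mb * g := by
  have hε : 0 ≤ ε := by linarith [hmax x]
  have hg0 : 0 ≤ g := (norm_nonneg _).trans hg
  have hC : 0 ≤ M * Φ ^ (1 + γ) := by positivity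
  have hint : Integrable fun y : Ed d =>
      ‖y‖ ^ (-((d : ℝ) + α)) * jumpBound (M * Φ ^ (1 + γ)) Φ γ ε g y := by
    have hdom := integrable_norm_rpow_mul_ite (volume : Measure (Ed d))
      (by rwa [finrank_euclideanSpace_fin]) hα hαγ (M * Φ ^ (1 + γ)) ε
    rw [finrank_euclideanSpace_fin] at hdom
    refine hdom.mono' ((measurable_norm.pow_const _).mul
      measurable_jumpBound).aestronglyMeasurable (ae_of_all _ fun y => ?_)
    rw [norm_mul, Real.norm_of_nonneg (by positivity),
      Real.norm_of_nonneg (jumpBound_nonneg hC hΦ hε hg0 y)]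
    gcongr
    exact jumpBound_le_ite le_rfl y
  -- If the jump integrand is not integrable, the integral in `Lalpha` is `0`, still below the
  -- nonnegative majorant.
  have hjumps : ∫ y in {y : Ed d | y ≠ 0}, ‖y‖ ^ (-((d : ℝ) + α)) •
        (u (x + σ x y) - u x - (ball 0 1).indicator (fun y' => fderiv ℝ u x (σ x y')) y)
      ≤ ∫ y : Ed d, ‖y‖ ^ (-((d : ℝ) + α)) * jumpBound (M * Φ ^ (1 + γ)) Φ γ ε g y := by
    have : Nontrivial (Ed d) := Module.nontrivial_of_finrank_pos (R := ℝ)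
      (by rw [finrank_euclideanSpace_fin]; exact hd)
    rw [show {y : Ed d | y ≠ 0} = {0}ᶜ from rfl, restrict_compl_singleton]
    by_cases hF : Integrable fun y : Ed d => ‖y‖ ^ (-((d : ℝ) + α)) •
        (u (x + σ x y) - u x - (ball 0 1).indicator (fun y' => fderiv ℝ u x (σ x y')) y)
    · refine integral_mono hF hint fun y => ?_
      rw [smul_eq_mul]
      gcongr
      exact sub_sub_indicator_le_jumpBound hu hM hγ hDu hΦ (hσ x) hmax hg y
    · rw [integral_undef hF]
      exact integral_nonneg fun y => mul_nonneg (by positivity) (jumpBound_nonneg hC hΦ hε hg0 y)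
  have hdrift : fderiv ℝ u x (b x) ≤ Mb * g :=
    calc fderiv ℝ u x (b x) ≤ ‖fderiv ℝ u x‖ * ‖b x‖ :=
          (le_abs_self _).trans ((fderiv ℝ u x).le_opNorm _)
      _ ≤ g * Mb := mul_le_mul hg (hb x) (norm_nonneg _) hg0
      _ = Mb * g := mul_comm _ _
  exact add_le_add hjumps hdrift

theorem mul_le_of_sub_Lalpha_le {d : ℕ} (hd : 1 ≤ d) {α γ : ℝ} (hα : 0 < α) (hγ : 0 < γ)
    (hαγ : α < 1 + γ) {σ : Ed d → Ed d → Ed d} {Φ : ℝ} (hΦ : 0 ≤ Φ)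
    (hσ : ∀ x y, ‖σ x y‖ ≤ Φ * ‖y‖) {b : Ed d → Ed d} {Mb : ℝ} (hb : ∀ x, ‖b x‖ ≤ Mb)
    {κ : ℝ} (hκ : 0 < κ) {u : Ed d → ℝ} (hu : Differentiable ℝ u) (hbdd : BddAbove (range u))
    {M : ℝ} (hM : 0 ≤ M) (hDu : ∀ x y, ‖fderiv ℝ u x - fderiv ℝ u y‖ ≤ M * ‖x - y‖ ^ γ)
    {B : ℝ} (hsub : ∀ x, κ * u x - Lalpha d α σ b u x ≤ B) (z : Ed d) :
    κ * u z ≤ B := by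
  set C := M * Φ ^ (1 + γ)
  set I : ℝ → ℝ := fun t => ∫ y : Ed d, ‖y‖ ^ (-((d : ℝ) + α)) *
    jumpBound C Φ γ (t ^ 2) (t + M * t ^ γ) y
  have hid : Tendsto (fun t : ℝ => t) (𝓝[>] 0) (𝓝 0) :=
    tendsto_nhdsWithin_of_tendsto_nhds tendsto_id
  have hgrad : Tendsto (fun t : ℝ => t + M * t ^ γ) (𝓝[>] 0) (𝓝 0) := by
    have hpow : Tendsto (fun t : ℝ => t ^ γ) (𝓝[>] 0) (𝓝 0) := by
      simpa [Real.zero_rpow hγ.ne'] using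
        tendsto_nhdsWithin_of_tendsto_nhds ((Real.continuous_rpow_const hγ.le).tendsto 0)
    simpa using hid.add (hpow.const_mul M)
  have hsq : Tendsto (fun t : ℝ => t ^ 2) (𝓝[>] 0) (𝓝 0) := by simpa using hid.pow 2
  have hI : Tendsto I (𝓝[>] 0) (𝓝 0) := by
    have := tendsto_integral_jumpBound (volume : Measure (Ed d)) (C := C)
      (by rwa [finrank_euclideanSpace_fin]) hα hαγ (by positivity) hΦ hsq hgrad
      (Eventually.of_forall fun t => sq_nonneg t)
      (eventually_mem_nhdsWithin.mono fun t (ht : 0 < t) => by positivity)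
    rwa [finrank_euclideanSpace_fin] at this
  have hbound : ∀ t > 0, κ * u z ≤ B + κ * t ^ 2 + I t + Mb * (t + M * t ^ γ) := by
    intro t ht
    obtain ⟨x, hx⟩ := exists_lt_of_lt_ciSup (sub_lt_self (⨆ z, u z) (by positivity : 0 < t ^ 2))
    have hmax : ∀ z, u z ≤ u x + t ^ 2 := fun z => by linarith [le_ciSup hbdd z]
    have hDux : ‖fderiv ℝ u x‖ ≤ t + M * t ^ γ := by
      simpa [sq, mul_div_assoc, div_self ht.ne'] using
        norm_fderiv_le_of_le_add hu hM hγ.le hDu hmax ht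
    have hL := Lalpha_le_of_le_add hd hα hγ.le hαγ hΦ hσ hb hu hM hDu hmax hDux
    calc κ * u z ≤ κ * (u x + t ^ 2) := by gcongr; exact hmax z
      _ = (κ * u x - Lalpha d α σ b u x) + Lalpha d α σ b u x + κ * t ^ 2 := by ring
      _ ≤ B + κ * t ^ 2 + I t + Mb * (t + M * t ^ γ) := by linarith [hsub x]
  refine ge_of_tendsto (x := 𝓝[>] (0 : ℝ)) ?_ (eventually_mem_nhdsWithin.mono hbound)
  simpa using ((((hsq.const_mul κ).const_add B).add hI).add (hgrad.const_mul Mb))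

theorem Lalpha_neg (d : ℕ) (α : ℝ) (σ : Ed d → Ed d → Ed d) (b : Ed d → Ed d)
    (u : Ed d → ℝ) (x : Ed d) :
    Lalpha d α σ b (-u) x = -Lalpha d α σ b u x := by
  simp only [Lalpha, Pi.neg_apply, fderiv_neg, neg_apply, neg_add, ← integral_neg]
  congr 2 with y
  by_cases hy : y ∈ ball (0 : Ed d) 1 <;> simp [hy] <;> ring

theorem statement9_general (d : ℕ) (hd : 1 ≤ d) (α : ℝ) (hα : 1 < α ∧ α < 2)
    (σ : Ed d → Ed d → Ed d) (Cσ : ℝ) (φ : Ed d → ℝ) (hσ : SigmaHyp d σ Cσ φ)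
    (b : Ed d → Ed d) (hbbdd : ∃ M, ∀ x, ‖b x‖ ≤ M)
    (γ : ℝ) (hγ : 0 < γ ∧ γ < 1) (hγα : α < 1 + γ)
    (κ : ℝ) (hκ : 0 < κ)
    (f : Ed d → ℝ) (hfbdd : ∃ M, ∀ x, |f x| ≤ M)
    (u : Ed d → ℝ) (hu : ContDiff ℝ 1 u) (hubdd : ∃ M, ∀ x, |u x| ≤ M)
    (hu2 : ∃ M, 0 ≤ M ∧ ∀ x y, ‖fderiv ℝ u x - fderiv ℝ u y‖ ≤ M * ‖x - y‖ ^ γ)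
    (hsol : ∀ x, κ * u x - Lalpha d α σ b u x = f x) :
    κ * supNorm u ≤ supNorm f := by
  obtain ⟨Φ, hφΦ⟩ := hσ.phi_bdd
  have hΦ : 0 ≤ Φ := (hσ.phi_pos 0).le.trans (hφΦ 0)
  have hσΦ : ∀ x y, ‖σ x y‖ ≤ Φ * ‖y‖ := fun x y =>
    (hσ.growth_upper x y).trans (by gcongr; exact hφΦ x)
  obtain ⟨Mb, hb⟩ := hbbdd
  obtain ⟨U, hU⟩ := hubdd
  obtain ⟨M, hM, hDu⟩ := hu2
  obtain ⟨Mf, hMf⟩ := hfbdd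
  have hf : ∀ x, |f x| ≤ supNorm f := fun x => (Real.norm_eq_abs _).symm.trans_le <|
    le_ciSup ⟨Mf, by rintro _ ⟨x, rfl⟩; exact (Real.norm_eq_abs _).trans_le (hMf x)⟩ x
  have hdiff := hu.differentiable one_ne_zero
  have hα0 : 0 < α := by linarith [hα.1]
  have hupper := mul_le_of_sub_Lalpha_le hd hα0 hγ.1 hγα hΦ hσΦ hb hκ hdiff
    ⟨U, by rintro _ ⟨x, rfl⟩; exact (le_abs_self _).trans (hU x)⟩ hM hDu (B := supNorm f)
    fun x => by rw [hsol]; exact (le_abs_self _).trans (hf x)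
  have hlower := mul_le_of_sub_Lalpha_le hd hα0 hγ.1 hγα hΦ hσΦ hb hκ hdiff.neg
    ⟨U, by rintro _ ⟨x, rfl⟩; exact (neg_le_abs _).trans (hU x)⟩ hM
    (fun x y => by rw [fderiv_neg, fderiv_neg, neg_sub_neg, norm_sub_rev]; exact hDu x y)
    (B := supNorm f) fun x => by
      rw [Lalpha_neg, Pi.neg_apply]; linarith [hsol x, neg_abs_le (f x), hf x]
  rw [← le_div_iff₀' hκ]
  refine ciSup_le fun x => ?_
  rw [Real.norm_eq_abs, le_div_iff₀' hκ, abs_eq_max_neg, mul_max_of_nonneg _ _ hκ.le]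
  exact max_le (hupper x) (hlower x)

/-- maximum principle: if `u ∈ C_b^{1+γ}` with `1+γ > α` solves
`κu − L^α u = f` with `κ > 0` and `f` bounded continuous, then `κ‖u‖₀ ≤ ‖f‖₀`. -/
theorem statement9 (d : ℕ) (hd : 1 ≤ d) (α : ℝ) (hα : 1 < α ∧ α < 2)
    (σ : Ed d → Ed d → Ed d) (Cσ : ℝ) (φ : Ed d → ℝ) (hσ : SigmaHyp d σ Cσ φ)
    (b : Ed d → Ed d) (hbcont : Continuous b) (hbbdd : ∃ M, ∀ x, ‖b x‖ ≤ M)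
    (γ : ℝ) (hγ : 0 < γ ∧ γ < 1) (hγα : α < 1 + γ)
    (κ : ℝ) (hκ : 0 < κ)
    (f : Ed d → ℝ) (hfcont : Continuous f) (hfbdd : ∃ M, ∀ x, |f x| ≤ M)
    (u : Ed d → ℝ) (hu : ContDiff ℝ 1 u) (hubdd : ∃ M, ∀ x, |u x| ≤ M)
    (hu1 : ∃ M, ∀ x, ‖fderiv ℝ u x‖ ≤ M)
    (hu2 : ∃ M, 0 ≤ M ∧ ∀ x y, ‖fderiv ℝ u x - fderiv ℝ u y‖ ≤ M * ‖x - y‖ ^ γ)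
    (hsol : ∀ x, κ * u x - Lalpha d α σ b u x = f x) :
    κ * supNorm u ≤ supNorm f :=
  statement9_general d hd α hα σ Cσ φ hσ b hbbdd γ hγ hγα κ hκ f hfbdd u hu hubdd hu2 hsol
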